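/- Let ρ : ℝ → [0,1] be continuous and monotone with lim_{x→-∞} ρ(x) = 0 and lim_{x→∞} ρ(x) = 1, let η ∈ (0, 1/3), and let C_η > 0 satisfy ρ(x) < η for x ≤ -C_η and ρ(x) > 1 - η for x ≥ C_η. For a < b and c > 0, define h(x) := ρ(c₁(2x + c - 2a)) - ρ(c₁(2x - c - 2b)) with c₁ = C_η/c. Then h(x) ∈ (1 - 2η, 1] for x ∈ [a, b], and h(x) ∈ (-η, η) for x ≤ a - c or x ≥ b + c. -/
import Mathlib


theorem stmt_15 (ρ : ℝ → ℝ) (hρ_cont : Continuous ρ) (hρ_mono : Monotone ρ)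
    (hρ_range : ∀ x, ρ x ∈ Set.Icc (0 : ℝ) 1)
    (hρ_bot : Filter.Tendsto ρ Filter.atBot (nhds 0))
    (hρ_top : Filter.Tendsto ρ Filter.atTop (nhds 1))
    (η : ℝ) (hη : η ∈ Set.Ioo (0 : ℝ) (1 / 3))
    (Cη : ℝ) (hCη : 0 < Cη)
    (hlo : ∀ x ≤ -Cη, ρ x < η) (hhi : ∀ x, Cη ≤ x → 1 - η < ρ x)
    (a b c : ℝ) (hab : a < b) (hc : 0 < c) :
    (∀ x ∈ Set.Icc a b,
        ρ (Cη / c * (2 * x + c - 2 * a)) - ρ (Cη / c * (2 * x - c - 2 * b))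
          ∈ Set.Ioc (1 - 2 * η) 1) ∧
    (∀ x, x ≤ a - c ∨ b + c ≤ x →
        ρ (Cη / c * (2 * x + c - 2 * a)) - ρ (Cη / c * (2 * x - c - 2 * b))
          ∈ Set.Ioo (-η) η) := by
  have hc1 : 0 < Cη / c := div_pos hCη hc
  constructor
  · rintro x ⟨hxa, hxb⟩
    have h1 : Cη ≤ Cη / c * (2 * x + c - 2 * a) := by
      have : c ≤ 2 * x + c - 2 * a := by linarith
      calc Cη = Cη / c * c := by field_simp
        _ ≤ _ := by nlinarith
    have h2 : Cη / c * (2 * x - c - 2 * b) ≤ -Cη := by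
      have : 2 * x - c - 2 * b ≤ -c := by linarith
      calc Cη / c * (2 * x - c - 2 * b) ≤ Cη / c * (-c) := by nlinarith
        _ = -Cη := by field_simp
    have hA := hhi _ h1
    have hB := hlo _ h2
    have hAr := hρ_range (Cη / c * (2 * x + c - 2 * a))
    have hBr := hρ_range (Cη / c * (2 * x - c - 2 * b))
    simp only [Set.mem_Icc] at hAr hBr
    constructor <;> nlinarith
  · rintro x (hx | hx)
    · have h1 : Cη / c * (2 * x + c - 2 * a) ≤ -Cη := by
        have : 2 * x + c - 2 * a ≤ -c := by linarith
        calc Cη / c * (2 * x + c - 2 * a) ≤ Cη / c * (-c) := by nlinarith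
          _ = -Cη := by field_simp
      have hA := hlo _ h1
      have hord : ρ (Cη / c * (2 * x - c - 2 * b)) ≤ ρ (Cη / c * (2 * x + c - 2 * a)) := by
        apply hρ_mono; nlinarith
      have hBr := hρ_range (Cη / c * (2 * x - c - 2 * b))
      simp only [Set.mem_Icc] at hBr
      constructor <;> nlinarith [hη.1]
    · have h2 : Cη ≤ Cη / c * (2 * x - c - 2 * b) := by
        have : c ≤ 2 * x - c - 2 * b := by linarith
        calc Cη = Cη / c * c := by field_simp
          _ ≤ _ := by nlinarith
      have hB := hhi _ h2
      have hord : ρ (Cη / c * (2 * x - c - 2 * b)) ≤ ρ (Cη / c * (2 * x + c - 2 * a)) := by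
        apply hρ_mono; nlinarith
      have hAr := hρ_range (Cη / c * (2 * x + c - 2 * a))
      simp only [Set.mem_Icc] at hAr
      constructor <;> nlinarith [hη.1]
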